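/- Fix Γ with 0 < Γ < 1. Every a* ∈ (0,1) at which a ↦ K(a,Γ) attains its maximum over [0,1) satisfies the stationarity equation [1 + a*² + Γ(1 − a*²)]² − 2·( r_e + a*⁴/r_e ) = 0, where r_e = 1 + P(a*,Γ). -/

import Mathlib

/-- The steady-state prediction error variance `P(a, Γ)`: the unique positive root of
`P² + (1 − a²)(1 − Γ)P − Γ(1 − a²) = 0`, given in closed form. -/
noncomputable def Pss (a Γ : ℝ) : ℝ :=
  ((1 - a ^ 2) * (Γ - 1) +
    Real.sqrt ((1 - a ^ 2) ^ 2 * (1 - Γ) ^ 2 + 4 * Γ * (1 - a ^ 2))) / 2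

/-- The steady-state Kalman gain factor `K_p = a·P/(1+P)`. -/
noncomputable def Kgain (a Γ : ℝ) : ℝ := a * Pss a Γ / (1 + Pss a Γ)

/-- `P̃ = K_p²/(1 − (a − K_p)²)`, the solution of the Lyapunov equation. -/
noncomputable def Ptilde (a Γ : ℝ) : ℝ :=
  (Kgain a Γ) ^ 2 / (1 - (a - Kgain a Γ) ^ 2)

/-- The closed-form error exponent `K(a, Γ) = ½·log(1+P) + ½·(1+P̃)/(1+P) − ½`. -/
noncomputable def Kexp (a Γ : ℝ) : ℝ :=
  (1 / 2) * Real.log (1 + Pss a Γ) + (1 / 2) * (1 + Ptilde a Γ) / (1 + Pss a Γ) - 1 / 2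

/-!
On `a² < 1`, `P = Pss a Γ` is differentiable in `a`, and differentiating its quadratic equation gives
`P' = -2aP²(1+P) / ((1-a²)((1+P)²-a²))`. Since `a - K_p = a/(1+P)`, `P̃ = a²P²/((1+P)²-a²)`, and the
chain rule gives `K'(a) = -aP²(((1+P)²+a²)² - 2(1+P)((1+P)²+a⁴)) / ((1-a²)((1+P)²-a²)³)`.
By the quadratic equation once more, `(1+P)² + a² = (1+P)(1+a²+Γ(1-a²))`, so the bracket is
`(1+P)²` times the stationarity expression. At an interior maximizer `K'(a*) = 0`, and all other
factors are nonzero.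
-/

open Filter Topology

section Pss

variable {a Γ : ℝ}

lemma Pss_sq_add_mul_sub_eq_zero (ha : a ^ 2 < 1) (hΓ : 0 < Γ) :
    Pss a Γ ^ 2 + (1 - a ^ 2) * (1 - Γ) * Pss a Γ - Γ * (1 - a ^ 2) = 0 := by
  have hD : 0 ≤ (1 - a ^ 2) ^ 2 * (1 - Γ) ^ 2 + 4 * Γ * (1 - a ^ 2) := by
    have : 0 < 1 - a ^ 2 := by linarith
    positivity
  rw [Pss]
  linear_combination Real.sq_sqrt hD / 4

lemma Pss_pos (ha : a ^ 2 < 1) (hΓ : 0 < Γ) : 0 < Pss a Γ := by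
  have hc : 0 < 1 - a ^ 2 := by linarith
  have h : (1 - a ^ 2) * (1 - Γ) <
      Real.sqrt ((1 - a ^ 2) ^ 2 * (1 - Γ) ^ 2 + 4 * Γ * (1 - a ^ 2)) :=
    Real.lt_sqrt_of_sq_lt (by nlinarith [mul_pos hΓ hc])
  rw [Pss]
  linarith

lemma sq_lt_sq_one_add_Pss (ha : a ^ 2 < 1) (hΓ : 0 < Γ) : a ^ 2 < (1 + Pss a Γ) ^ 2 := by
  nlinarith [Pss_pos ha hΓ]

lemma Ptilde_eq (ha : a ^ 2 < 1) (hΓ : 0 < Γ) :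
    Ptilde a Γ = a ^ 2 * Pss a Γ ^ 2 / ((1 + Pss a Γ) ^ 2 - a ^ 2) := by
  have hr : 0 < 1 + Pss a Γ := by linarith [Pss_pos ha hΓ]
  have hd : (1 + Pss a Γ) ^ 2 - a ^ 2 ≠ 0 := by linarith [sq_lt_sq_one_add_Pss ha hΓ]
  have hsub : a - Kgain a Γ = a / (1 + Pss a Γ) := by
    rw [Kgain]
    field_simp
    ring
  rw [Ptilde, hsub, Kgain]
  field_simp

lemma hasDerivAt_Pss (ha : a ^ 2 < 1) (hΓ : 0 < Γ) :
    HasDerivAt (fun x => Pss x Γ)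
      (-(2 * a * Pss a Γ ^ 2 * (1 + Pss a Γ)) / ((1 - a ^ 2) * ((1 + Pss a Γ) ^ 2 - a ^ 2))) a := by
  set P := Pss a Γ with hP
  have hc : 0 < 1 - a ^ 2 := by linarith
  have hD : 0 < (1 - a ^ 2) ^ 2 * (1 - Γ) ^ 2 + 4 * Γ * (1 - a ^ 2) := by positivity
  have hsqrt : Real.sqrt ((1 - a ^ 2) ^ 2 * (1 - Γ) ^ 2 + 4 * Γ * (1 - a ^ 2)) =
      2 * P + (1 - a ^ 2) * (1 - Γ) := by
    rw [hP, Pss]; ring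
  have hS : 0 < 2 * P + (1 - a ^ 2) * (1 - Γ) := hsqrt ▸ Real.sqrt_pos.mpr hD
  have hd : 0 < (1 + P) ^ 2 - a ^ 2 := by linarith [sq_lt_sq_one_add_Pss ha hΓ]
  have hc' : HasDerivAt (fun x : ℝ => 1 - x ^ 2) (-(2 * a)) a := by
    simpa using (hasDerivAt_pow 2 a).const_sub 1
  have hD' := ((hc'.pow 2).mul_const ((1 - Γ) ^ 2)).add (hc'.const_mul (4 * Γ))
  have h := ((hc'.mul_const (Γ - 1)).add (hD'.sqrt hD.ne')).div_const 2
  have hraw : HasDerivAt (fun x => Pss x Γ)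
      (2 * a * ((1 - Γ) * P - Γ) / (2 * P + (1 - a ^ 2) * (1 - Γ))) a := by
    refine h.congr_deriv ?_
    simp only [Pi.add_apply, Pi.pow_apply]
    rw [hsqrt]
    field_simp
    ring
  refine hraw.congr_deriv ?_
  rw [div_eq_div_iff hS.ne' (by positivity)]
  linear_combination (2 * a + 4 * a * P + 4 * a * P ^ 2 - 2 * a ^ 3) * Pss_sq_add_mul_sub_eq_zero ha hΓ

lemma hasDerivAt_Kexp (ha : a ^ 2 < 1) (hΓ : 0 < Γ) :
    HasDerivAt (fun x => Kexp x Γ)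
      (-(a * Pss a Γ ^ 2 * (((1 + Pss a Γ) ^ 2 + a ^ 2) ^ 2 -
          2 * (1 + Pss a Γ) * ((1 + Pss a Γ) ^ 2 + a ^ 4))) /
        ((1 - a ^ 2) * ((1 + Pss a Γ) ^ 2 - a ^ 2) ^ 3)) a := by
  have hr : 1 + Pss a Γ ≠ 0 := by linarith [Pss_pos ha hΓ]
  have hd : (1 + Pss a Γ) ^ 2 - a ^ 2 ≠ 0 := by linarith [sq_lt_sq_one_add_Pss ha hΓ]
  have hc : 1 - a ^ 2 ≠ 0 := by linarith
  have hP := hasDerivAt_Pss ha hΓ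
  have hr' := hP.const_add 1
  have hfrac := ((hasDerivAt_pow 2 a).mul (hP.pow 2)).div ((hr'.pow 2).sub (hasDerivAt_pow 2 a)) hd
  have hK := (((hr'.log hr).const_mul (1 / 2 : ℝ)).add
    (((hfrac.const_add 1).const_mul (1 / 2 : ℝ)).div hr' hr)).sub_const (1 / 2 : ℝ)
  have hKexp : (fun x => Kexp x Γ) =ᶠ[𝓝 a] fun x => (1 / 2) * Real.log (1 + Pss x Γ) +
      (1 / 2) * (1 + x ^ 2 * Pss x Γ ^ 2 / ((1 + Pss x Γ) ^ 2 - x ^ 2)) / (1 + Pss x Γ) - 1 / 2 := by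
    have hnhds : {x : ℝ | x ^ 2 < 1} ∈ 𝓝 a :=
      (isOpen_lt (continuous_pow 2) continuous_const).mem_nhds ha
    filter_upwards [hnhds] with x hx
    rw [Kexp, Ptilde_eq hx hΓ]
  refine (hK.congr_of_eventuallyEq hKexp).congr_deriv ?_
  simp only [Pi.pow_apply, Pi.mul_apply, Pi.div_apply, Pi.sub_apply]
  field_simp
  ring

lemma stationarity_expr_eq (ha : a ^ 2 < 1) (hΓ : 0 < Γ) :
    (1 + a ^ 2 + Γ * (1 - a ^ 2)) ^ 2 - 2 * ((1 + Pss a Γ) + a ^ 4 / (1 + Pss a Γ)) =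
      (((1 + Pss a Γ) ^ 2 + a ^ 2) ^ 2 - 2 * (1 + Pss a Γ) * ((1 + Pss a Γ) ^ 2 + a ^ 4)) /
        (1 + Pss a Γ) ^ 2 := by
  have hr : 1 + Pss a Γ ≠ 0 := by linarith [Pss_pos ha hΓ]
  have hfactor : (1 + Pss a Γ) * (1 + a ^ 2 + Γ * (1 - a ^ 2)) = (1 + Pss a Γ) ^ 2 + a ^ 2 := by
    linear_combination -Pss_sq_add_mul_sub_eq_zero ha hΓ
  rw [← hfactor]
  field_simp

end Pss

theorem optimal_correlation_stationarity_general (Γ : ℝ) (hΓ0 : 0 < Γ) :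
    ∀ astar ∈ Set.Ioo (0 : ℝ) 1,
      (∀ a ∈ Set.Ico (0 : ℝ) 1, Kexp a Γ ≤ Kexp astar Γ) →
      (1 + astar ^ 2 + Γ * (1 - astar ^ 2)) ^ 2 -
        2 * ((1 + Pss astar Γ) + astar ^ 4 / (1 + Pss astar Γ)) = 0 := by
  rintro astar ⟨h0, h1⟩ hmax
  have ha : astar ^ 2 < 1 := by nlinarith
  have hloc : IsLocalMax (fun a => Kexp a Γ) astar :=
    eventually_of_mem (Ioo_mem_nhds h0 h1) fun a ha => hmax a ⟨ha.1.le, ha.2⟩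
  have hderiv := hloc.hasDerivAt_eq_zero (hasDerivAt_Kexp ha hΓ0)
  have hP := Pss_pos ha hΓ0
  have hd : 0 < (1 + Pss astar Γ) ^ 2 - astar ^ 2 := by linarith [sq_lt_sq_one_add_Pss ha hΓ0]
  rw [stationarity_expr_eq ha hΓ0, div_eq_zero_iff]
  left
  simpa [h0.ne', hP.ne', hd.ne', (sub_pos.mpr ha).ne'] using hderiv

/-- Fix `0 < Γ < 1`. Every `astar ∈ (0,1)` at which `a ↦ K(a,Γ)` attains its maximum over `[0,1)`
satisfies the stationarity equation `[1 + astar² + Γ(1 − astar²)]² − 2(r_e + astar⁴/r_e) = 0`,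
where `r_e = 1 + P(astar,Γ)`. -/
theorem optimal_correlation_stationarity (Γ : ℝ) (hΓ0 : 0 < Γ) (hΓ1 : Γ < 1) :
    ∀ astar ∈ Set.Ioo (0 : ℝ) 1,
      (∀ a ∈ Set.Ico (0 : ℝ) 1, Kexp a Γ ≤ Kexp astar Γ) →
      (1 + astar ^ 2 + Γ * (1 - astar ^ 2)) ^ 2 -
        2 * ((1 + Pss astar Γ) + astar ^ 4 / (1 + Pss astar Γ)) = 0 :=
  optimal_correlation_stationarity_general Γ hΓ0
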